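/- arXiv:2408.13767 — 3 statements merged into one kernel-verified Lean document; each statement's English description precedes it below -/
import Mathlib

section
/- Let W₁,…,Wₙ be square d×d matrices with unbalancedness magnitude zero, i.e. Wⱼ₊₁ᵀWⱼ₊₁ = WⱼWⱼᵀ for all j = 1,…,n−1. Then there exist orthogonal matrices U₁,…,Uₙ, V₁ and a diagonal matrix S with nonnegative entries such that Wⱼ = Uⱼ S Uⱼ₋₁ᵀ for j = 2,…,n and W₁ = U₁ S V₁ᵀ; consequently Wₙ Wₙ₋₁ ⋯ W₁ = Uₙ Sⁿ V₁ᵀ. -/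
/-!
If `Aᵀ A = Bᵀ B`, then `‖A x‖ = ‖B x‖` for every `x`, so `B x ↦ A x` is a well-defined isometry
on the range of `B`; extending it to the whole space gives an orthogonal `U` with `A = U B`.
Applied to `B = S Vᵀ`, where `W₀ᵀ W₀ = V S² Vᵀ` is a spectral decomposition, this is an SVD
`W₀ = U₀ S V₁ᵀ`. If `Wⱼ = Uⱼ S Yᵀ` with `Y` orthogonal, balancedness gives
`Wⱼ₊₁ᵀ Wⱼ₊₁ = Wⱼ Wⱼᵀ = (S Uⱼᵀ)ᵀ (S Uⱼᵀ)`, so the same fact yields `Wⱼ₊₁ = Uⱼ₊₁ S Uⱼᵀ`.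
In the product the inner factors `Uⱼᵀ Uⱼ` cancel.
-/

open Matrix

/-- Product `W (m-1) * ⋯ * W j` of a chain of matrices with dimensions given by `d`
(the identity when `m = j`, junk when `m < j`). -/
noncomputable def chain (d : ℕ → ℕ) (W : ∀ k : ℕ, Matrix (Fin (d (k + 1))) (Fin (d k)) ℝ)
    (j : ℕ) : (m : ℕ) → Matrix (Fin (d m)) (Fin (d j)) ℝ
  | 0 => if h : j = 0 then by subst h; exact 1 else 0
  | m + 1 => if h : j = m + 1 then by subst h; exact 1 else W m * chain d W j m

theorem LinearMap.exists_linearIsometry_comp_eq_of_norm_eq {𝕜 E F : Type*} [RCLike 𝕜]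
    [AddCommGroup E] [Module 𝕜 E] [NormedAddCommGroup F] [InnerProductSpace 𝕜 F]
    [FiniteDimensional 𝕜 F] {f g : E →ₗ[𝕜] F} (h : ∀ x, ‖f x‖ = ‖g x‖) :
    ∃ L : F →ₗᵢ[𝕜] F, L.toLinearMap ∘ₗ g = f := by
  have hker : ker g ≤ ker f := fun x hx => by
    rw [mem_ker, ← norm_eq_zero, h, norm_eq_zero]; exact hx
  let L₀ : range g →ₗ[𝕜] F := (ker g).liftQ f hker ∘ₗ g.quotKerEquivRange.symm
  have hL₀ : ∀ x, L₀ ⟨g x, mem_range_self g x⟩ = f x := fun x => by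
    simp [L₀, quotKerEquivRange_symm_apply_image]
  let L₁ : range g →ₗᵢ[𝕜] F := ⟨L₀, by rintro ⟨_, x, rfl⟩; simp [hL₀, h]⟩
  exact ⟨L₁.extend, LinearMap.ext fun x => (L₁.extend_apply ⟨g x, _⟩).trans (hL₀ x)⟩

section Orthogonal

variable {ι : Type*} [Fintype ι] [DecidableEq ι]

theorem Matrix.exists_mem_unitaryGroup_eq_mul_of_conjTranspose_mul_self_eq {𝕜 : Type*} [RCLike 𝕜]
    {A B : Matrix ι ι 𝕜} (h : Aᴴ * A = Bᴴ * B) : ∃ U ∈ unitaryGroup ι 𝕜, A = U * B := by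
  let T := toEuclideanCLM (𝕜 := 𝕜) (n := ι)
  have hnorm : ∀ x, ‖T A x‖ = ‖T B x‖ := fun x => by
    rw [ContinuousLinearMap.apply_norm_eq_sqrt_inner_adjoint_left,
      ContinuousLinearMap.apply_norm_eq_sqrt_inner_adjoint_left]
    have hgram : ∀ C, ContinuousLinearMap.adjoint (T C) ∘L T C = T (Cᴴ * C) := fun C => by
      rw [map_mul, ← star_eq_conjTranspose, map_star]; rfl
    rw [hgram, hgram, h]
  obtain ⟨L, hL⟩ := LinearMap.exists_linearIsometry_comp_eq_of_norm_eq
    (f := (T A : EuclideanSpace 𝕜 ι →ₗ[𝕜] EuclideanSpace 𝕜 ι)) (g := T B) hnorm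
  refine ⟨T.symm L.toContinuousLinearMap, ?_, EquivLike.injective T ?_⟩
  · rw [mem_unitaryGroup_iff']
    apply EquivLike.injective T
    rw [map_mul, map_star, StarAlgEquiv.apply_symm_apply, map_one]
    exact L.adjoint_comp_self
  · rw [map_mul, StarAlgEquiv.apply_symm_apply]
    ext1 x
    exact (LinearMap.congr_fun hL x).symm

theorem Matrix.exists_orthogonal_eq_mul_of_transpose_mul_self_eq {A B : Matrix ι ι ℝ}
    (h : Aᵀ * A = Bᵀ * B) :
    ∃ U : Matrix ι ι ℝ, Uᵀ * U = 1 ∧ A = U * B := by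
  simp only [← conjTranspose_eq_transpose_of_trivial] at h ⊢
  obtain ⟨U, hU, rfl⟩ := exists_mem_unitaryGroup_eq_mul_of_conjTranspose_mul_self_eq h
  exact ⟨U, mem_unitaryGroup_iff'.1 hU, rfl⟩

theorem Matrix.exists_svd (A : Matrix ι ι ℝ) :
    ∃ (U V : Matrix ι ι ℝ) (s : ι → ℝ), Uᵀ * U = 1 ∧ Vᵀ * V = 1 ∧ (∀ i, 0 ≤ s i) ∧
      A = U * diagonal s * Vᵀ := by
  have hA : (Aᵀ * A).PosSemidef := by
    simpa using posSemidef_conjTranspose_mul_self A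
  let V : Matrix ι ι ℝ := hA.1.eigenvectorUnitary
  let s i := √(hA.1.eigenvalues i)
  have hV : Vᵀ * V = 1 := mem_unitaryGroup_iff'.1 hA.1.eigenvectorUnitary.2
  have hspec : Aᵀ * A = (diagonal s * Vᵀ)ᵀ * (diagonal s * Vᵀ) := by
    have hs : diagonal s * diagonal s = diagonal hA.1.eigenvalues := by
      rw [diagonal_mul_diagonal]
      exact congrArg diagonal (funext fun i => Real.mul_self_sqrt (hA.eigenvalues_nonneg i))
    rw [transpose_mul, transpose_transpose, diagonal_transpose, mul_assoc, ← mul_assoc (diagonal s),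
      hs, ← mul_assoc]
    conv_lhs => rw [hA.1.spectral_theorem, Unitary.conjStarAlgAut_apply]
    simp [V, star_eq_conjTranspose]
  obtain ⟨U, hU, hAU⟩ := exists_orthogonal_eq_mul_of_transpose_mul_self_eq hspec
  exact ⟨U, V, s, hU, hV, fun i => Real.sqrt_nonneg _, by rw [hAU, mul_assoc]⟩

theorem exists_orthogonal_eq_mul_mul_transpose_of_balanced {W W' X Y S : Matrix ι ι ℝ}
    (hS : S.IsSymm) (hY : Yᵀ * Y = 1) (hW : W = X * S * Yᵀ) (hbal : W'ᵀ * W' = W * Wᵀ) :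
    ∃ X' : Matrix ι ι ℝ, X'ᵀ * X' = 1 ∧ W' = X' * S * Xᵀ := by
  have hgram : W'ᵀ * W' = (S * Xᵀ)ᵀ * (S * Xᵀ) := by
    calc W'ᵀ * W' = X * S * (Yᵀ * Y) * Sᵀ * Xᵀ := by
          rw [hbal, hW, transpose_mul, transpose_mul, transpose_transpose]; noncomm_ring
      _ = (S * Xᵀ)ᵀ * (S * Xᵀ) := by
          rw [hY, transpose_mul, transpose_transpose, hS.eq]; noncomm_ring
  obtain ⟨X', hX', hW'⟩ := exists_orthogonal_eq_mul_of_transpose_mul_self_eq hgram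
  exact ⟨X', hX', by rw [hW', mul_assoc]⟩

/-- `Q 0` plays the role of `V₁` and `Q (j + 1)` that of `U j`. -/
theorem exists_orthogonal_seq_of_balanced {W : ℕ → Matrix ι ι ℝ} {X Y S : Matrix ι ι ℝ}
    (hS : S.IsSymm) (hX : Xᵀ * X = 1) (hY : Yᵀ * Y = 1) (hW₀ : W 0 = X * S * Yᵀ) {m : ℕ}
    (hbal : ∀ j < m, (W (j + 1))ᵀ * W (j + 1) = W j * (W j)ᵀ) :
    ∃ Q : ℕ → Matrix ι ι ℝ,
      (∀ j ≤ m + 1, (Q j)ᵀ * Q j = 1) ∧ ∀ j ≤ m, W j = Q (j + 1) * S * (Q j)ᵀ := by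
  induction m with
  | zero =>
    refine ⟨Function.update (fun _ => X) 0 Y, fun j hj => ?_, fun j hj => ?_⟩
    · obtain rfl | rfl : j = 0 ∨ j = 1 := by omega
      · simpa using hY
      · simpa using hX
    · obtain rfl : j = 0 := by omega
      simpa using hW₀
  | succ m ih =>
    obtain ⟨Q, hQ, hWQ⟩ := ih fun j hj => hbal j (by omega)
    obtain ⟨X', hX', hW'⟩ := exists_orthogonal_eq_mul_mul_transpose_of_balanced hS
      (hQ m (by omega)) (hWQ m le_rfl) (hbal m (by omega))
    refine ⟨Function.update Q (m + 2) X', fun j hj => ?_, fun j hj => ?_⟩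
    · rcases eq_or_ne j (m + 2) with rfl | hj'
      · simpa using hX'
      · simpa [hj'] using hQ j (by omega)
    · rcases eq_or_ne j (m + 1) with rfl | hj'
      · simpa using hW'
      · simpa [hj', show j ≠ m + 2 by omega] using hWQ j (by omega)

end Orthogonal

theorem chain_succ {d : ℕ → ℕ} {W : ∀ k : ℕ, Matrix (Fin (d (k + 1))) (Fin (d k)) ℝ} {j m : ℕ}
    (h : j ≤ m) : chain d W j (m + 1) = W m * chain d W j m :=
  dif_neg (by omega)

theorem chain_eq_mul_pow_mul_transpose {d m : ℕ} {W Q : ℕ → Matrix (Fin d) (Fin d) ℝ}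
    {S : Matrix (Fin d) (Fin d) ℝ} (hQ : ∀ j ≤ m, (Q j)ᵀ * Q j = 1)
    (hW : ∀ j ≤ m, W j = Q (j + 1) * S * (Q j)ᵀ) :
    chain (fun _ => d) W 0 (m + 1) = Q (m + 1) * S ^ (m + 1) * (Q 0)ᵀ := by
  induction m with
  | zero => rw [chain_succ le_rfl, pow_one]; exact (mul_one _).trans (hW 0 le_rfl)
  | succ m ih =>
    rw [chain_succ (Nat.zero_le _), ih (fun j hj => hQ j (by omega)) (fun j hj => hW j (by omega)),
      hW (m + 1) le_rfl]
    calc Q (m + 2) * S * (Q (m + 1))ᵀ * (Q (m + 1) * S ^ (m + 1) * (Q 0)ᵀ)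
        = Q (m + 2) * S * ((Q (m + 1))ᵀ * Q (m + 1)) * S ^ (m + 1) * (Q 0)ᵀ := by noncomm_ring
      _ = Q (m + 2) * S ^ (m + 2) * (Q 0)ᵀ := by
        rw [hQ (m + 1) le_rfl, mul_one, mul_assoc _ S, ← pow_succ']

/-- Square matrices `W₁,…,Wₙ` (here 0-indexed as `W 0,…,W (n-1)`) with unbalancedness magnitude
zero admit compatible singular value decompositions: there are orthogonal `U₀,…,U_{n-1}, V₁` and a
diagonal nonnegative `S` with `W 0 = U 0 * S * V₁ᵀ` and `W (j+1) = U (j+1) * S * (U j)ᵀ`;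
consequently the end-to-end matrix `W (n-1) * ⋯ * W 0` equals `U (n-1) * Sⁿ * V₁ᵀ`. -/
theorem balanced_joint_svd {d n : ℕ} (hn : 1 ≤ n)
    (W : ℕ → Matrix (Fin d) (Fin d) ℝ)
    (hbal : ∀ j : ℕ, j + 1 < n → (W (j + 1))ᵀ * W (j + 1) = W j * (W j)ᵀ) :
    ∃ (U : ℕ → Matrix (Fin d) (Fin d) ℝ) (V₁ S : Matrix (Fin d) (Fin d) ℝ),
      (∀ j < n, (U j)ᵀ * U j = 1) ∧ V₁ᵀ * V₁ = 1 ∧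
      S.IsDiag ∧ (∀ i, 0 ≤ S i i) ∧
      W 0 = U 0 * S * V₁ᵀ ∧
      (∀ j : ℕ, j + 1 < n → W (j + 1) = U (j + 1) * S * (U j)ᵀ) ∧
      chain (fun _ => d) W 0 n = U (n - 1) * S ^ n * V₁ᵀ := by
  obtain ⟨m, rfl⟩ : ∃ m, n = m + 1 := ⟨n - 1, by omega⟩
  obtain ⟨U₀, V₁, s, hU₀, hV₁, hs, hW₀⟩ := (W 0).exists_svd
  obtain ⟨Q, hQ, hWQ⟩ := exists_orthogonal_seq_of_balanced (isDiag_diagonal s).isSymm hU₀ hV₁ hW₀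
    (m := m) fun j hj => hbal j (by omega)
  refine ⟨fun j => Q (j + 1), Q 0, diagonal s, fun j hj => hQ (j + 1) (by omega), hQ 0 (by omega),
    isDiag_diagonal s, by simpa using hs, hWQ 0 (by omega), fun j hj => hWQ (j + 1) (by omega), ?_⟩
  simpa using chain_eq_mul_pow_mul_transpose (fun j hj => hQ j (by omega)) hWQ
end

section
/- Under gradient flow on φ(W₁,…,Wₙ) = ℓ(Wₙ⋯W₁) with square d×d weight matrices whose unbalancedness magnitude is zero at initialization, the product matrix W(t) := Wₙ(t)⋯W₁(t) satisfies the end-to-end dynamics Ẇ(t) = −∑_{j=1}^{n} [W(t)W(t)ᵀ]^{(j−1)/n} ∇ℓ(W(t)) [W(t)ᵀW(t)]^{(n−j)/n}. -/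
open Matrix

/-- The spectral real power `A ^ β` of a (positive semidefinite) symmetric real matrix, defined
via the spectral decomposition (with `0 ^ 0 = 1`, so `A ^ 0 = I`); junk value `0` if `A` is not
symmetric. -/
noncomputable def psdPow {m : ℕ} (A : Matrix (Fin m) (Fin m) ℝ) (β : ℝ) :
    Matrix (Fin m) (Fin m) ℝ :=
  if hA : A.IsHermitian then hA.cfc (fun x => x ^ β) else 0

open Finset

/-!
Two facts about the flow make the formula work. First, balancedness is conserved: along the flow
the derivatives of `Wⱼ₊₁ᵀWⱼ₊₁` and of `WⱼWⱼᵀ` coincide. Second, for balanced factors the Gram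
matrices of the partial products telescope:
`(Wⱼ⋯W₁)ᵀ(Wⱼ⋯W₁) = (W₁ᵀW₁)ʲ` and `(Wₙ⋯Wⱼ₊₁)(Wₙ⋯Wⱼ₊₁)ᵀ = (WₙWₙᵀ)ⁿ⁻ʲ`.
So `WWᵀ` and `WᵀW` are `n`-th powers of positive semidefinite matrices, their fractional powers
are integer powers of `WₙWₙᵀ` and `W₁ᵀW₁`, and the product rule
`Ẇ = ∑ⱼ (Wₙ⋯Wⱼ₊₁) Ẇⱼ (Wⱼ₋₁⋯W₁)` turns into the claimed sum term by term.
-/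

section Chain

variable {d : ℕ} (V : ℕ → Matrix (Fin d) (Fin d) ℝ)

lemma chain_self (j : ℕ) : chain (fun _ => d) V j j = 1 := by
  cases j <;> rw [chain, dif_pos rfl]

lemma chain_succ_s5 {j m : ℕ} (hj : j ≠ m + 1) :
    chain (fun _ => d) V j (m + 1) = V m * chain (fun _ => d) V j m := by
  rw [chain, dif_neg hj]

lemma chain_eq_chain_succ_mul {j m : ℕ} (hj : j < m) :
    chain (fun _ => d) V j m = chain (fun _ => d) V (j + 1) m * V j := by
  induction m with
  | zero => omega
  | succ m ih =>
    rcases (Nat.lt_succ_iff.mp hj).lt_or_eq with h | rfl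
    · rw [chain_succ_s5 V (by omega), chain_succ_s5 V (by omega), ih h, Matrix.mul_assoc]
    · rw [chain_succ_s5 V (by omega), chain_self, chain_self, Matrix.one_mul, Matrix.mul_one]

lemma chain_transpose_reverse {n m : ℕ} (hm : m ≤ n) :
    chain (fun _ => d) (fun i => (V (n - 1 - i))ᵀ) 0 m = (chain (fun _ => d) V (n - m) n)ᵀ := by
  induction m with
  | zero => rw [Nat.sub_zero, chain_self, chain_self, transpose_one]
  | succ m ih =>
    rw [chain_succ_s5 _ (by omega), ih (by omega), chain_eq_chain_succ_mul V (j := n - (m + 1))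
      (by omega), show n - (m + 1) + 1 = n - m by omega, transpose_mul,
      show n - (m + 1) = n - 1 - m by omega]

end Chain

/-- Zero unbalancedness magnitude of the layers `V 0, …, V (n - 1)`. -/
def IsBalanced {d : ℕ} (n : ℕ) (V : ℕ → Matrix (Fin d) (Fin d) ℝ) : Prop :=
  ∀ j, j + 1 < n → (V (j + 1))ᵀ * V (j + 1) = V j * (V j)ᵀ

namespace IsBalanced

variable {d n : ℕ} {V : ℕ → Matrix (Fin d) (Fin d) ℝ}

lemma reverse (hV : IsBalanced n V) : IsBalanced n (fun i => (V (n - 1 - i))ᵀ) := by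
  intro j hj
  simp only [transpose_transpose]
  rw [show n - 1 - (j + 1) = n - 2 - j by omega, ← hV (n - 2 - j) (by omega),
    show n - 2 - j + 1 = n - 1 - j by omega]

lemma chain_mul_gram (hV : IsBalanced n V) {i : ℕ} (hi : i < n) :
    chain (fun _ => d) V 0 (i + 1) * ((V 0)ᵀ * V 0) =
      V i * (V i)ᵀ * chain (fun _ => d) V 0 (i + 1) := by
  induction i with
  | zero => simp [chain_succ_s5, chain_self, Matrix.mul_assoc]
  | succ i ih =>
    rw [chain_succ_s5 V (by omega), Matrix.mul_assoc, ih (by omega), ← hV i hi]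
    simp only [Matrix.mul_assoc]

lemma transpose_chain_mul_chain (hV : IsBalanced n V) {j : ℕ} (hj : j ≤ n) :
    (chain (fun _ => d) V 0 j)ᵀ * chain (fun _ => d) V 0 j = ((V 0)ᵀ * V 0) ^ j := by
  induction j with
  | zero => simp [chain_self]
  | succ j ih =>
    cases j with
    | zero => simp [chain_succ_s5, chain_self]
    | succ i =>
      set P := chain (fun _ => d) V 0 (i + 1)
      calc (chain (fun _ => d) V 0 (i + 1 + 1))ᵀ * chain (fun _ => d) V 0 (i + 1 + 1)
          = Pᵀ * ((V (i + 1))ᵀ * V (i + 1) * P) := by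
            rw [chain_succ_s5 V (by omega), transpose_mul]
            simp only [P, Matrix.mul_assoc]
        _ = Pᵀ * P * ((V 0)ᵀ * V 0) := by
            rw [hV i (by omega), ← hV.chain_mul_gram (by omega), Matrix.mul_assoc]
        _ = ((V 0)ᵀ * V 0) ^ (i + 1 + 1) := by rw [ih (by omega), ← pow_succ]

lemma chain_mul_transpose_chain (hV : IsBalanced n V) {j : ℕ} (hj : j ≤ n) :
    chain (fun _ => d) V j n * (chain (fun _ => d) V j n)ᵀ =
      (V (n - 1) * (V (n - 1))ᵀ) ^ (n - j) := by
  have h := hV.reverse.transpose_chain_mul_chain (Nat.sub_le n j)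
  rw [chain_transpose_reverse V (Nat.sub_le n j), Nat.sub_sub_self hj] at h
  simpa using h

end IsBalanced

lemma psdPow_pow_div {m : ℕ} {M : Matrix (Fin m) (Fin m) ℝ} (hM : M.PosSemidef) {n : ℕ}
    (hn : 0 < n) (k : ℕ) : psdPow (M ^ n) ((k : ℝ) / n) = M ^ k := by
  have hcomp := cfc_comp_pow (fun x : ℝ => x ^ ((k : ℝ) / n)) n M
    (Real.continuous_rpow_const (by positivity)).continuousOn hM.1
  rw [psdPow, dif_pos (hM.pow n).1, ← IsHermitian.cfc_eq, ← hcomp,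
    ← cfc_pow_id (R := ℝ) M k hM.1]
  refine cfc_congr fun x hx => ?_
  have hx0 : 0 ≤ x := by
    rw [hM.isHermitian.spectrum_real_eq_range_eigenvalues] at hx
    obtain ⟨i, rfl⟩ := hx
    exact hM.eigenvalues_nonneg i
  rw [← Real.rpow_natCast x n, ← Real.rpow_mul hx0, mul_div_cancel₀ _ (by positivity),
    Real.rpow_natCast]

lemma HasDerivAt.matrix_mul_apply {l m p : Type*} [Fintype m] {A : ℝ → Matrix l m ℝ}
    {B : ℝ → Matrix m p ℝ} {A' : Matrix l m ℝ} {B' : Matrix m p ℝ} {t : ℝ}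
    (hA : ∀ i k, HasDerivAt (fun s => A s i k) (A' i k) t)
    (hB : ∀ k j, HasDerivAt (fun s => B s k j) (B' k j) t) (i : l) (j : p) :
    HasDerivAt (fun s => (A s * B s) i j) ((A' * B t + A t * B') i j) t := by
  simp only [mul_apply, Matrix.add_apply]
  rw [← sum_add_distrib]
  exact HasDerivAt.fun_sum fun k _ => (hA i k).mul (hB k j)

section GradientFlow

variable {d : ℕ} {W W' : ℕ → ℝ → Matrix (Fin d) (Fin d) ℝ}

lemma hasDerivAt_chain {m : ℕ} {t : ℝ}
    (hW : ∀ k < m, ∀ i i', HasDerivAt (fun s => W k s i i') (W' k t i i') t) (i i' : Fin d) :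
    HasDerivAt (fun s => chain (fun _ => d) (fun k => W k s) 0 m i i')
      ((∑ j ∈ range m, chain (fun _ => d) (fun k => W k t) (j + 1) m * W' j t *
        chain (fun _ => d) (fun k => W k t) 0 j) i i') t := by
  induction m generalizing i i' with
  | zero =>
    simp only [chain_self, range_zero, sum_empty, Matrix.zero_apply]
    exact hasDerivAt_const _ _
  | succ m ih =>
    set V := fun k => W k t
    have hsum : ∑ j ∈ range (m + 1), chain (fun _ => d) V (j + 1) (m + 1) * W' j t *
          chain (fun _ => d) V 0 j =
        W' m t * chain (fun _ => d) V 0 m +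
          V m * ∑ j ∈ range m, chain (fun _ => d) V (j + 1) m * W' j t *
            chain (fun _ => d) V 0 j := by
      rw [sum_range_succ, chain_self, Matrix.one_mul, mul_sum, add_comm]
      congr 1
      refine sum_congr rfl fun j hj => ?_
      rw [chain_succ_s5 V (by simp at hj; omega)]
      simp only [Matrix.mul_assoc]
    simp only [chain_succ_s5 (j := 0) (m := m) _ (Nat.succ_ne_zero m).symm]
    rw [hsum]
    exact HasDerivAt.matrix_mul_apply (hW m (by omega))
      (ih fun k hk => hW k (by omega)) i i'

lemma transpose_mul_deriv_eq_of_flow {V V' : ℕ → Matrix (Fin d) (Fin d) ℝ}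
    (G : Matrix (Fin d) (Fin d) ℝ) {n : ℕ}
    (hflow : ∀ k < n,
      V' k = -((chain (fun _ => d) V (k + 1) n)ᵀ * G * (chain (fun _ => d) V 0 k)ᵀ))
    {j : ℕ} (hj : j + 1 < n) :
    (V' (j + 1))ᵀ * V (j + 1) + (V (j + 1))ᵀ * V' (j + 1) = V' j * (V j)ᵀ + V j * (V' j)ᵀ := by
  rw [hflow (j + 1) hj, hflow j (by omega), chain_eq_chain_succ_mul V hj,
    chain_succ_s5 V (Nat.succ_ne_zero j).symm]
  simp only [transpose_neg, transpose_mul, transpose_transpose, Matrix.neg_mul,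
    Matrix.mul_neg, Matrix.mul_assoc]
  abel

lemma isBalanced_of_flow (G : ℝ → Matrix (Fin d) (Fin d) ℝ) {n : ℕ}
    (hderiv : ∀ k < n, ∀ (t : ℝ) (i i' : Fin d),
      HasDerivAt (fun s => W k s i i') (W' k t i i') t)
    (hflow : ∀ k < n, ∀ t : ℝ,
      W' k t = -((chain (fun _ => d) (fun k' => W k' t) (k + 1) n)ᵀ * G t *
        (chain (fun _ => d) (fun k' => W k' t) 0 k)ᵀ))
    (h0 : IsBalanced n fun k => W k 0) (t : ℝ) : IsBalanced n fun k => W k t := by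
  intro j hj
  have hder : ∀ i i' s, HasDerivAt
      (fun u => ((W (j + 1) u)ᵀ * W (j + 1) u - W j u * (W j u)ᵀ) i i') 0 s := by
    intro i i' s
    have h := (HasDerivAt.matrix_mul_apply (A := fun u => (W (j + 1) u)ᵀ)
        (A' := (W' (j + 1) s)ᵀ) (fun a b => hderiv (j + 1) hj s b a) (hderiv (j + 1) hj s) i i')
      |>.fun_sub (HasDerivAt.matrix_mul_apply (B := fun u => (W j u)ᵀ) (B' := (W' j s)ᵀ)
        (hderiv j (by omega) s) (fun a b => hderiv j (by omega) s b a) i i')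
    rwa [← Matrix.sub_apply, transpose_mul_deriv_eq_of_flow (G s) (fun k hk => hflow k hk s) hj,
      sub_self, Matrix.zero_apply] at h
  ext i i'
  have h := is_const_of_deriv_eq_zero (fun s => (hder i i' s).differentiableAt)
    (fun s => (hder i i' s).deriv) t 0
  simpa [h0 j hj, sub_eq_zero] using h

end GradientFlow

lemma IsBalanced.sum_chain_mul_flow_mul_chain_eq {d n : ℕ} {V : ℕ → Matrix (Fin d) (Fin d) ℝ}
    (hV : IsBalanced n V) (G : Matrix (Fin d) (Fin d) ℝ) :
    ∑ j ∈ range n, chain (fun _ => d) V (j + 1) n *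
        -((chain (fun _ => d) V (j + 1) n)ᵀ * G * (chain (fun _ => d) V 0 j)ᵀ) *
        chain (fun _ => d) V 0 j =
      -∑ j ∈ range n,
        psdPow (chain (fun _ => d) V 0 n * (chain (fun _ => d) V 0 n)ᵀ) ((j : ℝ) / n) * G *
          psdPow ((chain (fun _ => d) V 0 n)ᵀ * chain (fun _ => d) V 0 n)
            (((n : ℝ) - (j + 1)) / n) := by
  set M := (V 0)ᵀ * V 0
  set N := V (n - 1) * (V (n - 1))ᵀ
  have hM : M.PosSemidef := by
    simpa [M] using posSemidef_conjTranspose_mul_self (V 0)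
  have hN : N.PosSemidef := by
    simpa [N] using posSemidef_self_mul_conjTranspose (V (n - 1))
  calc _ = -∑ j ∈ range n, N ^ (n - (j + 1)) * G * M ^ j := by
        rw [← sum_neg_distrib]
        refine sum_congr rfl fun j hj => ?_
        have hj := mem_range.1 hj
        rw [← hV.transpose_chain_mul_chain hj.le, ← hV.chain_mul_transpose_chain hj]
        simp only [Matrix.mul_neg, Matrix.neg_mul, Matrix.mul_assoc]
    _ = -∑ j ∈ range n, N ^ j * G * M ^ (n - (j + 1)) := by
        rw [← sum_range_reflect]
        congr 1
        refine sum_congr rfl fun j hj => ?_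
        have hj := mem_range.1 hj
        rw [show n - (n - 1 - j + 1) = j by omega, show n - 1 - j = n - (j + 1) by omega]
    _ = _ := by
        congr 1
        refine sum_congr rfl fun j hj => ?_
        have hj := mem_range.1 hj
        rw [hV.chain_mul_transpose_chain (Nat.zero_le n), hV.transpose_chain_mul_chain le_rfl,
          Nat.sub_zero, show (n : ℝ) - (j + 1) = ((n - (j + 1) : ℕ) : ℝ) by
            rw [Nat.cast_sub hj]; push_cast; ring,
          psdPow_pow_div hN (by omega), psdPow_pow_div hM (by omega)]

/-- End-to-end dynamics: under gradient flow on `φ(W₁,…,Wₙ) = ℓ(Wₙ⋯W₁)` with square `d×d`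
weight matrices (0-indexed layers `k = 0,…,n−1`) whose unbalancedness magnitude is zero at
initialization, the product `P(t) := Wₙ(t)⋯W₁(t)` satisfies
`Ṗ(t) = −∑_{j=1}^{n} [P(t)P(t)ᵀ]^{(j−1)/n} ∇ℓ(P(t)) [P(t)ᵀP(t)]^{(n−j)/n}`. -/
theorem end_to_end_dynamics {d n : ℕ}
    (gradℓ : Matrix (Fin d) (Fin d) ℝ → Matrix (Fin d) (Fin d) ℝ)
    (W W' : ℕ → ℝ → Matrix (Fin d) (Fin d) ℝ)
    (hderiv : ∀ k < n, ∀ (t : ℝ) (i i' : Fin d),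
      HasDerivAt (fun s => W k s i i') (W' k t i i') t)
    (hflow : ∀ k < n, ∀ t : ℝ,
      W' k t = -((chain (fun _ => d) (fun k' => W k' t) (k + 1) n)ᵀ *
        gradℓ (chain (fun _ => d) (fun k' => W k' t) 0 n) *
        (chain (fun _ => d) (fun k' => W k' t) 0 k)ᵀ))
    (hbal0 : ∀ j : ℕ, j + 1 < n → (W (j + 1) 0)ᵀ * W (j + 1) 0 = W j 0 * (W j 0)ᵀ) :
    ∀ (t : ℝ), 0 ≤ t → ∀ (i i' : Fin d),
      HasDerivAt (fun s => chain (fun _ => d) (fun k' => W k' s) 0 n i i')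
        ((-(∑ j ∈ Finset.range n,
            psdPow (chain (fun _ => d) (fun k' => W k' t) 0 n *
                (chain (fun _ => d) (fun k' => W k' t) 0 n)ᵀ) ((j : ℝ) / n) *
              gradℓ (chain (fun _ => d) (fun k' => W k' t) 0 n) *
              psdPow ((chain (fun _ => d) (fun k' => W k' t) 0 n)ᵀ *
                chain (fun _ => d) (fun k' => W k' t) 0 n) (((n : ℝ) - (j + 1)) / n)))
          i i') t := by
  intro t _ i i'
  have hbal : IsBalanced n fun k => W k t := isBalanced_of_flow _ hderiv hflow hbal0 t
  have hD := hasDerivAt_chain (fun k hk => hderiv k hk t) i i'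
  rwa [sum_congr rfl fun j hj => by rw [hflow j (mem_range.1 hj) t],
    hbal.sum_chain_mul_flow_mul_chain_eq] at hD
end

section
/- Let ℓ(W) = (1/2)‖W − Λ‖_F² + c for a fixed matrix Λ ∈ ℝ^{dₙ×d₀} and constant c. Then W has deficiency margin δ > 0 (i.e., ℓ(W) < ℓ(W') for every W' with σ_min(W') ≤ δ) if and only if ‖W − Λ‖_F < σ_min(Λ) − δ. -/
/-!
Let `σ(A) = √λ_min(AᴴA) = min_{‖x‖ = 1} ‖A x‖`; `sigmaMin` is this for `A` or for `Aᵀ`. Since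
`‖(A - B) x‖ ≤ ‖A - B‖_F ‖x‖`, `σ` is `1`-Lipschitz for the Frobenius norm, so every `W'` with
`σ(W') ≤ δ` is at distance at least `σ(Λ) - δ` from `Λ`. Conversely, for a unit vector `x` with
`‖Λ x‖ = σ(Λ)`, the matrix `W' = Λ - (1 - δ / σ(Λ)) (Λ x) xᵀ` maps `x` to `(δ / σ(Λ)) Λ x`, so
`σ(W') ≤ δ`, and it lies at distance exactly `σ(Λ) - δ` from `Λ`. Hence
`min {‖W' - Λ‖_F | σ(W') ≤ δ} = max 0 (σ(Λ) - δ)`, and the loss is increasing in `‖W - Λ‖_F`.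
-/

open Matrix

/-- The Frobenius norm of a real matrix. -/
noncomputable def frobNorm {p q : ℕ} (M : Matrix (Fin p) (Fin q) ℝ) : ℝ :=
  Real.sqrt (∑ i, ∑ j, (M i j) ^ 2)

/-- The smallest singular value of a rectangular real matrix `W ∈ ℝ^{d×d'}`, i.e. the
`min{d,d'}`-th largest singular value: the square root of the smallest eigenvalue of the smaller
of the two Gram matrices `W Wᵀ`, `Wᵀ W`. -/
noncomputable def sigmaMin {d d' : ℕ} (W : Matrix (Fin d) (Fin d') ℝ) : ℝ :=
  if d ≤ d' then
    Real.sqrt (⨅ i : Fin d, (Matrix.posSemidef_self_mul_conjTranspose W).1.eigenvalues i)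
  else
    Real.sqrt (⨅ i : Fin d', (Matrix.posSemidef_conjTranspose_mul_self W).1.eigenvalues i)

open scoped RealInnerProductSpace

namespace Matrix

variable {m n : Type*} [Fintype m] [Fintype n] [DecidableEq n]

lemma IsHermitian.iInf_eigenvalues_mul_inner_self_le_inner_toEuclideanLin {H : Matrix n n ℝ}
    (hH : H.IsHermitian) (x : EuclideanSpace ℝ n) :
    (⨅ i, hH.eigenvalues i) * ⟪x, x⟫ ≤ ⟪x, toEuclideanLin H x⟫ := by
  set b := hH.eigenvectorBasis
  have hb (i : n) : ⟪b i, toEuclideanLin H x⟫ = hH.eigenvalues i * ⟪b i, x⟫ := by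
    rw [← isSymmetric_toEuclideanLin_iff.mpr hH, toLpLin_apply, hH.mulVec_eigenvectorBasis]
    simp [b, real_inner_smul_left]
  rw [← b.sum_inner_mul_inner x x, ← b.sum_inner_mul_inner x, Finset.mul_sum]
  refine Finset.sum_le_sum fun i _ => ?_
  rw [hb, real_inner_comm x]
  have := ciInf_le (Set.finite_range hH.eigenvalues).bddBelow i
  nlinarith [mul_self_nonneg ⟪b i, x⟫]

lemma IsHermitian.exists_inner_toEuclideanLin_eq_iInf_eigenvalues [Nonempty n]
    {H : Matrix n n ℝ} (hH : H.IsHermitian) :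
    ∃ x : EuclideanSpace ℝ n, ‖x‖ = 1 ∧ ⟪x, toEuclideanLin H x⟫ = ⨅ i, hH.eigenvalues i := by
  obtain ⟨i, hi⟩ := exists_eq_ciInf_of_finite (f := hH.eigenvalues)
  refine ⟨hH.eigenvectorBasis i, hH.eigenvectorBasis.orthonormal.1 i, ?_⟩
  rw [toLpLin_apply, hH.mulVec_eigenvectorBasis]
  simp [real_inner_smul_right, hi, hH.eigenvectorBasis.orthonormal.1 i]

lemma inner_toEuclideanLin_conjTranspose_mul_self (A : Matrix m n ℝ) (x : EuclideanSpace ℝ n) :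
    ⟪x, toEuclideanLin (Aᴴ * A) x⟫ = ‖toEuclideanLin A x‖ ^ 2 := by
  classical
  rw [toLpLin_mul_same, LinearMap.comp_apply, toEuclideanLin_conjTranspose_eq_adjoint,
    LinearMap.adjoint_inner_right, real_inner_self_eq_norm_sq]

end Matrix

section GramSigmaMin

variable {m n : Type*} [Fintype m] [Fintype n] [DecidableEq n]

noncomputable def gramSigmaMin (A : Matrix m n ℝ) : ℝ :=
  √(⨅ i, (posSemidef_conjTranspose_mul_self A).1.eigenvalues i)

lemma gramSigmaMin_of_isEmpty [IsEmpty n] (A : Matrix m n ℝ) : gramSigmaMin A = 0 := by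
  simp [gramSigmaMin]

lemma gramSigmaMin_mul_norm_le_norm_toEuclideanLin (A : Matrix m n ℝ) (x : EuclideanSpace ℝ n) :
    gramSigmaMin A * ‖x‖ ≤ ‖toEuclideanLin A x‖ := by
  set hA := (posSemidef_conjTranspose_mul_self A).1
  have h := hA.iInf_eigenvalues_mul_inner_self_le_inner_toEuclideanLin x
  rw [inner_toEuclideanLin_conjTranspose_mul_self, real_inner_self_eq_norm_sq] at h
  calc gramSigmaMin A * ‖x‖ = √((⨅ i, hA.eigenvalues i) * ‖x‖ ^ 2) := by
        rw [Real.sqrt_mul' _ (sq_nonneg _), Real.sqrt_sq (norm_nonneg _), gramSigmaMin]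
    _ ≤ √(‖toEuclideanLin A x‖ ^ 2) := Real.sqrt_le_sqrt h
    _ = ‖toEuclideanLin A x‖ := Real.sqrt_sq (norm_nonneg _)

lemma exists_norm_toEuclideanLin_eq_gramSigmaMin [Nonempty n] (A : Matrix m n ℝ) :
    ∃ x : EuclideanSpace ℝ n, ‖x‖ = 1 ∧ ‖toEuclideanLin A x‖ = gramSigmaMin A := by
  obtain ⟨x, hx, hAx⟩ :=
    (posSemidef_conjTranspose_mul_self A).1.exists_inner_toEuclideanLin_eq_iInf_eigenvalues
  rw [inner_toEuclideanLin_conjTranspose_mul_self] at hAx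
  exact ⟨x, hx, by rw [gramSigmaMin, ← hAx, Real.sqrt_sq (norm_nonneg _)]⟩

end GramSigmaMin

section Frobenius

variable {p q : ℕ}

lemma frobNorm_nonneg (M : Matrix (Fin p) (Fin q) ℝ) : 0 ≤ frobNorm M := Real.sqrt_nonneg _

lemma frobNorm_sq (M : Matrix (Fin p) (Fin q) ℝ) : frobNorm M ^ 2 = ∑ i, ∑ j, M i j ^ 2 :=
  Real.sq_sqrt (by positivity)

@[simp]
lemma frobNorm_zero : frobNorm (0 : Matrix (Fin p) (Fin q) ℝ) = 0 := by simp [frobNorm]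

lemma frobNorm_transpose (M : Matrix (Fin p) (Fin q) ℝ) : frobNorm Mᵀ = frobNorm M := by
  rw [frobNorm, Finset.sum_comm]; rfl

lemma frobNorm_vecMulVec (u : EuclideanSpace ℝ (Fin p)) (v : EuclideanSpace ℝ (Fin q)) :
    frobNorm (vecMulVec u v) = ‖u‖ * ‖v‖ := by
  simp_rw [frobNorm, vecMulVec_apply, mul_pow]
  rw [← Finset.sum_mul_sum, ← EuclideanSpace.real_norm_sq_eq, ← EuclideanSpace.real_norm_sq_eq,
    ← mul_pow, Real.sqrt_sq (by positivity)]

lemma norm_toEuclideanLin_le_frobNorm_mul (A : Matrix (Fin p) (Fin q) ℝ)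
    (x : EuclideanSpace ℝ (Fin q)) : ‖toEuclideanLin A x‖ ≤ frobNorm A * ‖x‖ := by
  refine (pow_le_pow_iff_left₀ (norm_nonneg _)
    (mul_nonneg (frobNorm_nonneg A) (norm_nonneg x)) two_ne_zero).mp ?_
  rw [mul_pow, frobNorm_sq, EuclideanSpace.real_norm_sq_eq, EuclideanSpace.real_norm_sq_eq,
    Finset.sum_mul]
  gcongr with i
  rw [toLpLin_apply]
  exact Finset.sum_mul_sq_le_sq_mul_sq Finset.univ (A i) x

lemma gramSigmaMin_le_add_frobNorm_sub (A B : Matrix (Fin p) (Fin q) ℝ) :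
    gramSigmaMin A ≤ gramSigmaMin B + frobNorm (B - A) := by
  cases isEmpty_or_nonempty (Fin q) with
  | inl _ =>
    rw [gramSigmaMin_of_isEmpty]
    exact add_nonneg (Real.sqrt_nonneg _) (frobNorm_nonneg _)
  | inr _ =>
    obtain ⟨x, hx, hBx⟩ := exists_norm_toEuclideanLin_eq_gramSigmaMin B
    calc gramSigmaMin A ≤ ‖toEuclideanLin A x‖ := by
          simpa [hx] using gramSigmaMin_mul_norm_le_norm_toEuclideanLin A x
      _ = ‖toEuclideanLin B x - toEuclideanLin (B - A) x‖ := by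
          rw [map_sub, LinearMap.sub_apply, sub_sub_cancel]
      _ ≤ ‖toEuclideanLin B x‖ + ‖toEuclideanLin (B - A) x‖ := norm_sub_le _ _
      _ ≤ gramSigmaMin B + frobNorm (B - A) := by
          rw [hBx]
          simpa [hx] using norm_toEuclideanLin_le_frobNorm_mul (B - A) x

lemma exists_gramSigmaMin_le_frobNorm_sub_eq (Λ : Matrix (Fin p) (Fin q) ℝ) {δ : ℝ}
    (hδ : 0 < δ) (hδΛ : δ ≤ gramSigmaMin Λ) :
    ∃ W, gramSigmaMin W ≤ δ ∧ frobNorm (W - Λ) = gramSigmaMin Λ - δ := by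
  have hσ : 0 < gramSigmaMin Λ := hδ.trans_le hδΛ
  have : Nonempty (Fin q) := by
    by_contra! h
    exact hσ.ne' (gramSigmaMin_of_isEmpty Λ)
  obtain ⟨x, hx, hΛx⟩ := exists_norm_toEuclideanLin_eq_gramSigmaMin Λ
  set s := 1 - δ / gramSigmaMin Λ
  have hs : 0 ≤ s := sub_nonneg.mpr ((div_le_one hσ).mpr hδΛ)
  set u := toEuclideanLin Λ x
  set W := Λ + vecMulVec ⇑(-s • u) ⇑x
  have hWx : toEuclideanLin W x = (δ / gramSigmaMin Λ) • u := by
    have hxx : ⇑x ⬝ᵥ ⇑x = 1 := by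
      simpa [dotProduct, sq, hx] using (EuclideanSpace.real_norm_sq_eq x).symm
    rw [toLpLin_apply, add_mulVec, vecMulVec_mulVec, hxx, MulOpposite.op_one, one_smul]
    ext i
    simp only [u, s, toLpLin_apply, neg_sub, WithLp.ofLp_smul, Pi.add_apply, Pi.smul_apply,
      smul_eq_mul, PiLp.smul_apply]
    ring
  refine ⟨W, ?_, ?_⟩
  · calc gramSigmaMin W ≤ ‖toEuclideanLin W x‖ := by
          simpa [hx] using gramSigmaMin_mul_norm_le_norm_toEuclideanLin W x
      _ = δ := by
          rw [hWx, norm_smul, hΛx, Real.norm_of_nonneg (by positivity), div_mul_cancel₀ _ hσ.ne']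
  · rw [add_sub_cancel_left, frobNorm_vecMulVec, hx, norm_smul, norm_neg, hΛx,
      Real.norm_of_nonneg hs, mul_one, sub_mul, one_mul, div_mul_cancel₀ _ hσ.ne']

end Frobenius

section SigmaMin

variable {d d' : ℕ}

lemma sigmaMin_of_le (h : d ≤ d') (W : Matrix (Fin d) (Fin d') ℝ) :
    sigmaMin W = gramSigmaMin Wᵀ := by
  rw [sigmaMin, if_pos h, gramSigmaMin]
  congr 2

lemma sigmaMin_of_not_le (h : ¬d ≤ d') (W : Matrix (Fin d) (Fin d') ℝ) :
    sigmaMin W = gramSigmaMin W := by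
  rw [sigmaMin, if_neg h, gramSigmaMin]

lemma sigmaMin_le_add_frobNorm_sub (A B : Matrix (Fin d) (Fin d') ℝ) :
    sigmaMin A ≤ sigmaMin B + frobNorm (B - A) := by
  by_cases h : d ≤ d'
  · simpa only [sigmaMin_of_le h, ← transpose_sub, frobNorm_transpose]
      using gramSigmaMin_le_add_frobNorm_sub Aᵀ Bᵀ
  · simpa only [sigmaMin_of_not_le h] using gramSigmaMin_le_add_frobNorm_sub A B

lemma exists_sigmaMin_le_frobNorm_sub_eq (Λ : Matrix (Fin d) (Fin d') ℝ) {δ : ℝ}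
    (hδ : 0 < δ) (hδΛ : δ ≤ sigmaMin Λ) :
    ∃ W, sigmaMin W ≤ δ ∧ frobNorm (W - Λ) = sigmaMin Λ - δ := by
  by_cases h : d ≤ d'
  · rw [sigmaMin_of_le h] at hδΛ ⊢
    obtain ⟨V, hVδ, hVΛ⟩ := exists_gramSigmaMin_le_frobNorm_sub_eq Λᵀ hδ hδΛ
    refine ⟨Vᵀ, by rwa [sigmaMin_of_le h, transpose_transpose], ?_⟩
    rwa [← frobNorm_transpose, transpose_sub, transpose_transpose]
  · rw [sigmaMin_of_not_le h] at hδΛ ⊢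
    simpa only [sigmaMin_of_not_le h] using exists_gramSigmaMin_le_frobNorm_sub_eq Λ hδ hδΛ

lemma isLeast_image_frobNorm_sub_setOf_sigmaMin_le (Λ : Matrix (Fin d) (Fin d') ℝ) {δ : ℝ}
    (hδ : 0 < δ) :
    IsLeast ((fun W ↦ frobNorm (W - Λ)) '' {W | sigmaMin W ≤ δ}) (max 0 (sigmaMin Λ - δ)) := by
  refine ⟨?_, ?_⟩
  · by_cases hδΛ : δ ≤ sigmaMin Λ
    · obtain ⟨W, hWδ, hWΛ⟩ := exists_sigmaMin_le_frobNorm_sub_eq Λ hδ hδΛ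
      exact ⟨W, hWδ, hWΛ.trans (max_eq_right (sub_nonneg.mpr hδΛ)).symm⟩
    · refine ⟨Λ, (not_le.mp hδΛ).le, ?_⟩
      simp only [sub_self, frobNorm_zero, max_eq_left (sub_nonpos.mpr (not_le.mp hδΛ).le)]
  · rintro _ ⟨W, hWδ, rfl⟩
    have := sigmaMin_le_add_frobNorm_sub Λ W
    exact max_le (frobNorm_nonneg _) (by linarith [hWδ.out])

end SigmaMin

theorem deficiency_margin_iff_general {d₀ dₙ : ℕ}
    (Λ : Matrix (Fin dₙ) (Fin d₀) ℝ) (c : ℝ) (δ : ℝ) (hδ : 0 < δ)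
    (W : Matrix (Fin dₙ) (Fin d₀) ℝ) :
    (∀ W' : Matrix (Fin dₙ) (Fin d₀) ℝ, sigmaMin W' ≤ δ →
        (1 / 2) * frobNorm (W - Λ) ^ 2 + c < (1 / 2) * frobNorm (W' - Λ) ^ 2 + c)
      ↔ frobNorm (W - Λ) < sigmaMin Λ - δ := by
  have hloss (A B : Matrix (Fin dₙ) (Fin d₀) ℝ) :
      (1 / 2) * frobNorm A ^ 2 + c < (1 / 2) * frobNorm B ^ 2 + c ↔ frobNorm A < frobNorm B := by
    rw [add_lt_add_iff_right, mul_lt_mul_iff_of_pos_left one_half_pos,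
      pow_lt_pow_iff_left₀ (frobNorm_nonneg A) (frobNorm_nonneg B) two_ne_zero]
  obtain ⟨⟨W₀, hW₀δ, hW₀Λ⟩, hlower⟩ := isLeast_image_frobNorm_sub_setOf_sigmaMin_le Λ hδ
  simp only [hloss]
  constructor
  · intro h
    exact (lt_max_iff.mp ((h W₀ hW₀δ).trans_eq hW₀Λ)).resolve_left (frobNorm_nonneg _).not_gt
  · intro h W' hW'δ
    exact h.trans_le ((le_max_right _ _).trans (hlower ⟨W', hW'δ, rfl⟩))

/-- For the loss `ℓ(W) = ½‖W − Λ‖_F² + c`, a matrix `W` has deficiency margin `δ > 0`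
(i.e. `ℓ(W) < ℓ(W')` whenever `σ_min(W') ≤ δ`) if and only if `‖W − Λ‖_F < σ_min(Λ) − δ`. -/
theorem deficiency_margin_iff {d₀ dₙ : ℕ} (hd₀ : 0 < d₀) (hdₙ : 0 < dₙ)
    (Λ : Matrix (Fin dₙ) (Fin d₀) ℝ) (c : ℝ) (δ : ℝ) (hδ : 0 < δ)
    (W : Matrix (Fin dₙ) (Fin d₀) ℝ) :
    (∀ W' : Matrix (Fin dₙ) (Fin d₀) ℝ, sigmaMin W' ≤ δ →
        (1 / 2) * frobNorm (W - Λ) ^ 2 + c < (1 / 2) * frobNorm (W' - Λ) ^ 2 + c)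
      ↔ frobNorm (W - Λ) < sigmaMin Λ - δ :=
  deficiency_margin_iff_general Λ c δ hδ W
end
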